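/- arXiv:2104.02335 — 2 statements merged into one kernel-verified Lean document; each statement's English description precedes it below -/
import Mathlib

section
/- Suppose G, g, and (ψ_k)_{k≥0} are formal power series over ℤ, p is a prime, and G|U_p = -Θ(ψ) - p·(G|V_p) where Θ(ψ)|U_{p^{2k}} ≡ 0 (mod p^{2k}) coefficientwise for all k ≥ 1 and (G|V_p)|U_{p^2} = G|U_p. Then for every integer m ≥ 0, G|U_{p^{2m+1}} ≡ (-1)^{m+1} p^m Θ(ψ) (mod p^{m+1}) coefficientwise. -/
/-- The `U_m` operator on formal Laurent series over `ℤ`. -/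
def Uop (m : ℕ) (f : ℤ → ℤ) : ℤ → ℤ := fun n => f (m * n)

/-- The `V_m` operator on formal Laurent series over `ℤ`. -/
def Vop (m : ℕ) (f : ℤ → ℤ) : ℤ → ℤ := fun n => if (m : ℤ) ∣ n then f (n / m) else 0

/-- The Ramanujan theta operator `Θ = q·d/dq`. -/
def Theta (f : ℤ → ℤ) : ℤ → ℤ := fun n => n * f n

/-- If `G|U_p = -Θ(ψ) - p·(G|V_p)`, where `Θ(ψ)|U_{p^{2k}} ≡ 0 (mod p^{2k})` for all
`k ≥ 1` and `(G|V_p)|U_{p^2} = G|U_p`, then for every `m ≥ 0`,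
`G|U_{p^{2m+1}} ≡ (-1)^{m+1} p^m Θ(ψ) (mod p^{m+1})` coefficientwise. -/
theorem U_odd_power_congruence (p : ℕ) (hp : p.Prime) (G g ψ : ℤ → ℤ)
    (h1 : ∀ n, Uop p G n = -(Theta ψ n) - (p : ℤ) * Vop p G n)
    (h2 : ∀ k : ℕ, 1 ≤ k → ∀ n, (p : ℤ) ^ (2 * k) ∣ Uop (p ^ (2 * k)) (Theta ψ) n)
    (h3 : ∀ n, Uop (p ^ 2) (Vop p G) n = Uop p G n) :
    ∀ m : ℕ, ∀ n, (p : ℤ) ^ (m + 1) ∣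
      Uop (p ^ (2 * m + 1)) G n - (-1) ^ (m + 1) * (p : ℤ) ^ m * Theta ψ n := by
  have hp0 : (p : ℤ) ≠ 0 := by exact_mod_cast hp.ne_zero
  intro m
  induction m with
  | zero =>
    intro n
    have h := h1 n
    simp only [Uop, Theta] at h ⊢
    have : (↑(p ^ (2 * 0 + 1)) : ℤ) * n = (p : ℤ) * n := by push_cast; ring
    rw [this, h]
    refine ⟨-(Vop p G n), ?_⟩
    push_cast
    ring
  | succ m ih =>
    intro n
    have hcast : (↑(p ^ (2 * (m + 1) + 1)) : ℤ) * n = (p : ℤ) * ((p : ℤ) ^ (2 * (m + 1)) * n) := by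
      push_cast; ring
    have h := h1 ((p : ℤ) ^ (2 * (m + 1)) * n)
    simp only [Uop, Theta, Vop] at h ⊢
    have hdvd : (p : ℤ) ∣ (p : ℤ) ^ (2 * (m + 1)) * n :=
      Dvd.dvd.mul_right (dvd_pow_self _ (by omega)) n
    rw [if_pos hdvd] at h
    have hdiv : ((p : ℤ) ^ (2 * (m + 1)) * n) / (p : ℤ) = (p : ℤ) ^ (2 * m + 1) * n := by
      have : (p : ℤ) ^ (2 * (m + 1)) * n = (p : ℤ) * ((p : ℤ) ^ (2 * m + 1) * n) := by ring
      rw [this, Int.mul_ediv_cancel_left _ hp0]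
    rw [hdiv] at h
    rw [hcast, h]
    -- IH at n
    obtain ⟨t, ht⟩ := ih n
    simp only [Uop, Theta] at ht
    have hcast2 : (↑(p ^ (2 * m + 1)) : ℤ) * n = (p : ℤ) ^ (2 * m + 1) * n := by push_cast; ring
    rw [hcast2] at ht
    have hG : G ((p : ℤ) ^ (2 * m + 1) * n)
        = (-1) ^ (m + 1) * (p : ℤ) ^ m * (n * ψ n) + (p : ℤ) ^ (m + 1) * t := by
      linarith [ht]
    rw [hG]
    -- Theta term divisibility from h2
    obtain ⟨s, hs⟩ := h2 (m + 1) (by omega) n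
    simp only [Uop, Theta] at hs
    have hcast3 : (↑(p ^ (2 * (m + 1))) : ℤ) * n = (p : ℤ) ^ (2 * (m + 1)) * n := by push_cast; ring
    rw [hcast3] at hs
    rw [hs]
    refine ⟨(p : ℤ) ^ m * (-s) - t, ?_⟩
    push_cast
    ring
end

section
/- The formal Laurent series L₁ = q⁻²·∏_{n≥1}(1-q^{9n})⁴(1-q^{3n})⁻¹(1-q^{27n})⁻³ is supported on exponents congruent to 1 modulo 3, i.e., L₁ = ∑ b(n)q^{3n+1} for some integers b(n). -/
open PowerSeries Finset

/-- Partial product `∏_{n=1}^{N} (1-q^{9n})⁴(1-q^{3n})⁻¹(1-q^{27n})⁻³` over `ℤ`. -/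
noncomputable def L1partial (N : ℕ) : PowerSeries ℤ :=
  ∏ n ∈ range N,
    ((1 - X ^ (9 * (n + 1))) ^ 4 * invOfUnit (1 - X ^ (3 * (n + 1))) 1 *
      (invOfUnit (1 - X ^ (27 * (n + 1))) 1) ^ 3)

/-- `L1coeff n` is the `n`-th coefficient of the formal Laurent series
`L₁ = q⁻² ∏_{n≥1}(1-q^{9n})⁴(1-q^{3n})⁻¹(1-q^{27n})⁻³`; in particular the
coefficients of `L₁` are integers. -/
noncomputable def L1coeff (n : ℤ) : ℤ :=
  if 0 ≤ n + 2 then coeff (n + 2).toNat (L1partial ((n + 2).toNat + 1)) else 0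

/-!
Every factor of the product is a power series in `q³`, and so is the inverse of a power
series in `q³`. Hence the partial products are the expansions `f(q³)` of power series `f`,
their coefficients vanish off multiples of `3`, and the shift by `q⁻²` moves the support
to exponents `≡ 1 (mod 3)`.
-/

namespace PowerSeries

variable {R : Type*} [CommRing R] (p : ℕ) (hp : p ≠ 0)

theorem expand_one_sub_X_pow (k : ℕ) :
    expand p hp (1 - X ^ k : R⟦X⟧) = 1 - X ^ (p * k) := by
  rw [map_sub, map_one, map_pow, expand_X, pow_mul]

theorem expand_invOfUnit {φ : R⟦X⟧} {u : Rˣ} (h : constantCoeff φ = u) :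
    expand p hp (invOfUnit φ u) = invOfUnit (expand p hp φ) u := by
  have hφ : φ * invOfUnit φ u = 1 := mul_invOfUnit φ u h
  have hexp : expand p hp φ * invOfUnit (expand p hp φ) u = 1 :=
    mul_invOfUnit _ u (by rw [constantCoeff_expand, h])
  refine left_inv_eq_right_inv ?_ hexp
  rw [mul_comm, ← map_mul, hφ, map_one]

theorem expand_invOfUnit_one_sub_X_pow {k : ℕ} (hk : k ≠ 0) :
    expand p hp (invOfUnit (1 - X ^ k : R⟦X⟧) 1) = invOfUnit (1 - X ^ (p * k)) 1 := by
  rw [expand_invOfUnit p hp (by simp [hk]), expand_one_sub_X_pow]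

end PowerSeries

theorem L1partial_eq_expand (N : ℕ) :
    L1partial N = expand 3 three_ne_zero (∏ n ∈ range N,
      ((1 - X ^ (3 * (n + 1))) ^ 4 * invOfUnit (1 - X ^ (n + 1)) 1 *
        (invOfUnit (1 - X ^ (9 * (n + 1))) 1) ^ 3)) := by
  simp [L1partial, expand_invOfUnit_one_sub_X_pow, expand_one_sub_X_pow, ← mul_assoc]

/-- `L₁` is supported on exponents `≡ 1 (mod 3)`. -/
theorem L1_support : ∀ n : ℤ, ¬ n ≡ 1 [ZMOD 3] → L1coeff n = 0 := by
  intro n hn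
  unfold L1coeff
  split_ifs with h
  · rw [L1partial_eq_expand]
    apply coeff_expand_of_not_dvd
    rw [Int.ModEq] at hn
    omega
  · rfl
end
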